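/- arXiv:2010.01922 — 5 statements merged into one kernel-verified Lean document; each statement's English description precedes it below -/
import Mathlib

section
/- Let κ be an infinite regular cardinal and let ⟨z_α : α < κ⁺⟩ be a sequence enumerating all of [κ⁺]^{<κ} (i.e., the map α ↦ z_α is surjective onto the collection of subsets of κ⁺ of cardinality less than κ). Then the set M = {γ ∈ S^{κ⁺}_κ : γ is approachable with respect to ⟨z_α : α < κ⁺⟩} is a stationary subset of κ⁺. -/
open Set Cardinal

/-- `C` is a closed unbounded subset of the ordinal `δ`. -/
def IsClubIn (δ : Ordinal.{0}) (C : Set Ordinal.{0}) : Prop :=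
  C ⊆ Set.Iio δ ∧
  (∀ α < δ, ∃ β ∈ C, α < β) ∧
  (∀ α < δ, 0 < α → (∀ β < α, ∃ γ ∈ C, β < γ ∧ γ < α) → α ∈ C)

/-- `S` is stationary in `δ`: it meets every club subset of `δ`. -/
def IsStationaryIn (δ : Ordinal.{0}) (S : Set Ordinal.{0}) : Prop :=
  ∀ C, IsClubIn δ C → (S ∩ C).Nonempty

/-- `γ` is approachable with respect to the sequence `z`: there is a strictly increasing
sequence of length `cof γ`, cofinal in `γ`, all of whose proper initial segments appear
in `z` before `γ`. -/
def Approachable (z : Ordinal.{0} → Set Ordinal.{0}) (γ : Ordinal.{0}) : Prop :=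
  ∃ f : Ordinal.{0} → Ordinal.{0},
    (∀ ξ η, ξ < η → η < γ.cof.ord → f ξ < f η) ∧
    (∀ ξ < γ.cof.ord, f ξ < γ) ∧
    (∀ β < γ, ∃ ξ < γ.cof.ord, β ≤ f ξ) ∧
    (∀ ξ < γ.cof.ord, ∃ α < γ, z α = f '' Set.Iio ξ)

/-- The set `S^{κ⁺}_κ` of ordinals below `κ⁺` of cofinality `κ`. -/
def SCof (κ : Cardinal.{0}) : Set Ordinal.{0} :=
  {γ | γ < (Order.succ κ).ord ∧ γ.cof = κ}

/-! Given a club `C ⊆ κ⁺`, choose recursively a strictly increasing `κ`-sequence in `C` whose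
`ξ`-th term lies above an index `α` with `z α` equal to the set of earlier terms; this set has
size `< κ`, so surjectivity of `z` provides `α`, and regularity of `κ⁺` keeps everything below
`κ⁺`. The supremum of the sequence lies in `C` by closure, has cofinality `κ`, and the
sequence itself witnesses its approachability. -/

open Order

universe u

namespace Ordinal

theorem exists_forall_lt_image_Iio {α : Type*} [Nonempty α] {o : Ordinal}
    (P : Set α → α → Prop)
    (h : ∀ ξ < o, ∀ f : Ordinal → α,
      (∀ η < ξ, P (f '' Iio η) (f η)) → ∃ a, P (f '' Iio ξ) a) :
    ∃ f : Ordinal → α, ∀ ξ < o, P (f '' Iio ξ) (f ξ) := by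
  let F : Ordinal → α := Ordinal.lt_wf.fix fun ξ IH =>
    Classical.epsilon (P (range fun η : Iio ξ => IH η η.2))
  have hF : ∀ ξ, F ξ = Classical.epsilon (P (F '' Iio ξ)) := fun ξ => by
    rw [image_eq_range]
    exact Ordinal.lt_wf.fix_eq _ ξ
  refine ⟨F, fun ξ => ?_⟩
  induction ξ using WellFoundedLT.induction with
  | _ ξ IH =>
    intro hξ
    rw [hF ξ]
    exact Classical.epsilon_spec (h ξ hξ F fun η hη => IH η hη (hη.trans hξ))

theorem lt_iSup_Iio_of_strictMonoOn {o ξ : Ordinal.{u}} (ho : IsSuccLimit o)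
    {f : Ordinal.{u} → Ordinal.{u}} (hf : StrictMonoOn f (Iio o)) (hξ : ξ < o) :
    f ξ < ⨆ η : Iio o, f η :=
  Ordinal.lt_iSup_iff.2 ⟨⟨succ ξ, ho.succ_lt hξ⟩, hf hξ (ho.succ_lt hξ) (lt_succ ξ)⟩

theorem iSup_Iio_lt_of_card_lt_cof {o δ : Ordinal.{u}} {f : Ordinal.{u} → Ordinal.{u}}
    (ho : o.card < δ.cof) (hf : ∀ ξ < o, f ξ < δ) :
    ⨆ ξ : Iio o, f ξ < δ := by
  refine lift_iSup_lt_of_lt_cof ?_ fun ξ => hf ξ ξ.2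
  rw [Cardinal.mk_Iio_ordinal, Cardinal.lift_lift, ← lift_cof, Cardinal.lift_lt]
  exact ho

theorem cof_iSup_Iio_of_strictMonoOn {o : Ordinal.{u}} (ho : IsSuccPrelimit o)
    {f : Ordinal.{u} → Ordinal.{u}} (hf : StrictMonoOn f (Iio o)) :
    (⨆ ξ : Iio o, f ξ).cof = o.cof :=
  cof_iSup_Iio hf.domRestrict ho

end Ordinal

section Club

variable {δ : Ordinal.{0}} {C : Set Ordinal.{0}}

theorem IsClubIn.exists_mem_gt_of_mk_lt_cof (hC : IsClubIn δ C) {s : Set Ordinal.{0}}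
    (hs : s ⊆ Iio δ) (hcard : #s < Cardinal.lift.{1} δ.cof) {α : Ordinal} (hα : α < δ) :
    ∃ β ∈ C, α < β ∧ ∀ x ∈ s, x < β := by
  have hsup : sSup s < δ := Ordinal.sSup_lt_of_lt_cof (by rwa [← Ordinal.lift_cof]) hs
  obtain ⟨β, hβC, hβ⟩ := hC.2.1 _ (max_lt hsup hα)
  refine ⟨β, hβC, (le_max_right _ _).trans_lt hβ, fun x hx => ?_⟩
  exact (le_csSup ⟨δ, fun y hy => (hs hy).le⟩ hx).trans_lt ((le_max_left _ _).trans_lt hβ)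

theorem IsClubIn.iSup_Iio_mem {o : Ordinal.{0}} (hC : IsClubIn δ C) (ho : IsSuccLimit o)
    {f : Ordinal → Ordinal} (hf : StrictMonoOn f (Iio o)) (hfC : ∀ ξ < o, f ξ ∈ C)
    (hlt : ⨆ ξ : Iio o, f ξ < δ) :
    ⨆ ξ : Iio o, f ξ ∈ C := by
  refine hC.2.2 _ hlt (zero_le.trans_lt (Ordinal.lt_iSup_Iio_of_strictMonoOn ho hf ho.bot_lt))
    fun β hβ => ?_
  obtain ⟨ξ, hξ⟩ := Ordinal.lt_iSup_iff.1 hβ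
  exact ⟨f ξ, hfC ξ ξ.2, hξ, Ordinal.lt_iSup_Iio_of_strictMonoOn ho hf ξ.2⟩

theorem IsClubIn.exists_approaching_seq (hC : IsClubIn δ C) {κ : Cardinal.{0}}
    (hκδ : κ < δ.cof) (z : Ordinal → Set Ordinal)
    (hsurj : ∀ x : Set Ordinal.{0}, x ⊆ Iio δ →
      #x < Cardinal.lift.{1} κ → ∃ α < δ, z α = x) :
    ∃ f : Ordinal → Ordinal, StrictMonoOn f (Iio κ.ord) ∧ (∀ ξ < κ.ord, f ξ ∈ C) ∧
      ∀ ξ < κ.ord, ∃ α < f ξ, z α = f '' Iio ξ := by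
  obtain ⟨f, hf⟩ := Ordinal.exists_forall_lt_image_Iio (o := κ.ord)
    (fun s β => β ∈ C ∧ (∀ x ∈ s, x < β) ∧ ∃ α < β, z α = s) fun ξ hξ f hf => by
      have hsub : f '' Iio ξ ⊆ Iio δ := by
        rintro _ ⟨η, hη, rfl⟩
        exact hC.1 (hf η hη).1
      have hcard : #(f '' Iio ξ) < Cardinal.lift.{1} κ := by
        refine mk_image_le.trans_lt ?_
        rw [Cardinal.mk_Iio_ordinal, Cardinal.lift_lt]
        exact Cardinal.lt_ord.1 hξ
      obtain ⟨α, hαδ, hzα⟩ := hsurj _ hsub hcard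
      obtain ⟨β, hβC, hαβ, hβ⟩ :=
        hC.exists_mem_gt_of_mk_lt_cof hsub (hcard.trans (Cardinal.lift_lt.2 hκδ)) hαδ
      exact ⟨β, hβC, hβ, α, hαβ, hzα⟩
  refine ⟨f, fun η _ ξ hξ hηξ => (hf ξ hξ).2.1 _ (mem_image_of_mem f hηξ),
    fun ξ hξ => (hf ξ hξ).1, fun ξ hξ => (hf ξ hξ).2.2⟩

end Club

theorem approachable_iSup_Iio {o : Ordinal.{0}} (ho : IsSuccLimit o) (hoc : o.cof.ord = o)
    {z : Ordinal → Set Ordinal} {f : Ordinal → Ordinal} (hf : StrictMonoOn f (Iio o))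
    (hz : ∀ ξ < o, ∃ α < f ξ, z α = f '' Iio ξ) :
    Approachable z (⨆ ξ : Iio o, f ξ) := by
  have hcof : (⨆ ξ : Iio o, f ξ).cof.ord = o := by
    rw [Ordinal.cof_iSup_Iio_of_strictMonoOn ho.isSuccPrelimit hf, hoc]
  have hlt : ∀ ξ < o, f ξ < ⨆ η : Iio o, f η :=
    fun _ => Ordinal.lt_iSup_Iio_of_strictMonoOn ho hf
  refine ⟨f, ?_, ?_, ?_, ?_⟩ <;> rw [hcof]
  · exact fun ξ η hξη hη => hf (hξη.trans hη) hη hξη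
  · exact hlt
  · intro β hβ
    obtain ⟨ξ, hξ⟩ := Ordinal.lt_iSup_iff.1 hβ
    exact ⟨ξ, ξ.2, hξ.le⟩
  · intro ξ hξ
    obtain ⟨α, hα, hzα⟩ := hz ξ hξ
    exact ⟨α, hα.trans (hlt ξ hξ), hzα⟩

theorem statement0_general (κ : Cardinal.{0}) (hκ : ℵ₀ ≤ κ) (hreg : κ.IsRegular)
    (z : Ordinal.{0} → Set Ordinal.{0})
    (hsurj : ∀ x : Set Ordinal.{0}, x ⊆ Set.Iio (Order.succ κ).ord →
      #x < Cardinal.lift.{1} κ → ∃ α < (Order.succ κ).ord, z α = x) :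
    IsStationaryIn (Order.succ κ).ord {γ | γ ∈ SCof κ ∧ Approachable z γ} := by
  intro C hC
  have hδcof : (succ κ).ord.cof = succ κ := (Cardinal.isRegular_succ hκ).cof_ord
  have hκlim : IsSuccLimit κ.ord := Cardinal.isSuccLimit_ord hκ
  obtain ⟨f, hf, hfC, hfz⟩ :=
    hC.exists_approaching_seq (by rw [hδcof]; exact lt_succ κ) z hsurj
  have hγδ : ⨆ ξ : Iio κ.ord, f ξ < (succ κ).ord :=
    Ordinal.iSup_Iio_lt_of_card_lt_cof (by rw [Cardinal.card_ord, hδcof]; exact lt_succ κ)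
      fun ξ hξ => hC.1 (hfC ξ hξ)
  refine ⟨⨆ ξ : Iio κ.ord, f ξ, ⟨⟨hγδ, ?_⟩, ?_⟩,
    hC.iSup_Iio_mem hκlim hf hfC hγδ⟩
  · rw [Ordinal.cof_iSup_Iio_of_strictMonoOn hκlim.isSuccPrelimit hf, hreg.cof_ord]
  · exact approachable_iSup_Iio hκlim (by rw [hreg.cof_ord]) hf hfz

theorem statement0 (κ : Cardinal.{0}) (hκ : ℵ₀ ≤ κ) (hreg : κ.IsRegular)
    (z : Ordinal.{0} → Set Ordinal.{0})
    (hz : ∀ α < (Order.succ κ).ord,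
      z α ⊆ Set.Iio (Order.succ κ).ord ∧ #(z α) < Cardinal.lift.{1} κ)
    (hsurj : ∀ x : Set Ordinal.{0}, x ⊆ Set.Iio (Order.succ κ).ord →
      #x < Cardinal.lift.{1} κ → ∃ α < (Order.succ κ).ord, z α = x) :
    IsStationaryIn (Order.succ κ).ord {γ | γ ∈ SCof κ ∧ Approachable z γ} :=
  statement0_general κ hκ hreg z hsurj
end

section
/- Let κ be an infinite regular cardinal, let ⟨z_α : α < κ⁺⟩ be a sequence enumerating all of [κ⁺]^{<κ}, and let M = {γ ∈ S^{κ⁺}_κ : γ is approachable with respect to ⟨z_α : α < κ⁺⟩}. If S ⊆ S^{κ⁺}_κ is stationary in κ⁺ and S belongs to the approachability ideal I[κ⁺], then S \ M is non-stationary in κ⁺. In other words, M is a maximum element of I[κ⁺] ∩ P(S^{κ⁺}_κ) modulo the non-stationary ideal. -/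
/-!
Since `z` enumerates all of `[κ⁺]^{<κ}`, each `u α` reappears as `z (h α)` for some `h α < κ⁺`.
The ordinals closed under `h` form a club, so on the club `D ∩ {γ | ∀ α < γ, h α < γ}` every
initial segment `u α` (`α < γ`) of an approaching sequence is also `z (h α)` with `h α < γ`:
approachability with respect to `u` turns into approachability with respect to `z`.
-/

open Set Cardinal

/-- `X` belongs to the approachability ideal `I[κ⁺]`: there are a club `D ⊆ κ⁺` and a
sequence `u` of subsets of `κ⁺` of cardinality `< κ` such that every `γ ∈ D ∩ X` is
approachable with respect to `u`. -/
def InAppIdeal (κ : Cardinal.{0}) (X : Set Ordinal.{0}) : Prop :=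
  ∃ D : Set Ordinal.{0}, ∃ u : Ordinal.{0} → Set Ordinal.{0},
    IsClubIn (Order.succ κ).ord D ∧
    (∀ α < (Order.succ κ).ord,
      u α ⊆ Set.Iio (Order.succ κ).ord ∧ #(u α) < Cardinal.lift.{1} κ) ∧
    ∀ γ ∈ D ∩ X, Approachable u γ

/-- `c` is the supremum of the `ω`-iterates `g^[n] α`, which stays below `δ` as `cof δ > ℵ₀`. -/
theorem exists_lt_forall_exists_map_lt {δ : Ordinal.{0}} (hδ : ℵ₀ < δ.cof)
    {g : Ordinal.{0} → Ordinal.{0}} (hg : ∀ β < δ, β < g β ∧ g β < δ) {α : Ordinal.{0}}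
    (hα : α < δ) : ∃ c < δ, α < c ∧ ∀ β < c, ∃ γ < c, β < γ ∧ g γ < c := by
  set e : ℕ → Ordinal.{0} := fun n => g^[n] α
  have he_succ : ∀ n, e (n + 1) = g (e n) := fun n => Function.iterate_succ_apply' g n α
  have he_lt : ∀ n, e n < δ := by
    intro n
    induction n with
    | zero => exact hα
    | succ n ih => rw [he_succ]; exact (hg _ ih).2
  have he_lt_iSup : ∀ n, e n < ⨆ n, e n := fun n =>
    ((he_succ n).symm ▸ (hg _ (he_lt n)).1).trans_le (Ordinal.le_iSup e (n + 1))
  refine ⟨⨆ n, e n, Ordinal.iSup_lt_of_lt_cof (by simpa using hδ) he_lt, he_lt_iSup 0,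
    fun β hβ => ?_⟩
  obtain ⟨n, hn⟩ := Ordinal.lt_iSup_iff.mp hβ
  exact ⟨e n, he_lt_iSup n, hn, he_succ n ▸ he_lt_iSup (n + 1)⟩

theorem IsClubIn.inter {δ : Ordinal.{0}} {C D : Set Ordinal.{0}} (hC : IsClubIn δ C)
    (hD : IsClubIn δ D) (hδ : ℵ₀ < δ.cof) : IsClubIn δ (C ∩ D) := by
  refine ⟨fun x hx => hC.1 hx.1, fun α hα => ?_, fun α hα h0 hcl => ⟨?_, ?_⟩⟩
  · choose! nextC hnextC using hC.2.1
    choose! nextD hnextD using hD.2.1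
    have hnext_lt : ∀ β < δ, nextC β < δ ∧ nextD β < δ := fun β hβ =>
      ⟨hC.1 (hnextC β hβ).1, hD.1 (hnextD β hβ).1⟩
    obtain ⟨c, hcδ, hαc, hc⟩ := exists_lt_forall_exists_map_lt hδ
      (g := fun β => max (nextC β) (nextD β))
      (fun β hβ => ⟨(hnextC β hβ).2.trans_le (le_max_left _ _),
        max_lt (hnext_lt β hβ).1 (hnext_lt β hβ).2⟩) hα
    have hc0 : 0 < c := hαc.pos
    refine ⟨c, ⟨hC.2.2 c hcδ hc0 fun β hβ => ?_, hD.2.2 c hcδ hc0 fun β hβ => ?_⟩, hαc⟩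
    · obtain ⟨γ, hγc, hβγ, hgγ⟩ := hc β hβ
      have hγδ := hγc.trans hcδ
      exact ⟨nextC γ, (hnextC γ hγδ).1, hβγ.trans (hnextC γ hγδ).2,
        (le_max_left _ _).trans_lt hgγ⟩
    · obtain ⟨γ, hγc, hβγ, hgγ⟩ := hc β hβ
      have hγδ := hγc.trans hcδ
      exact ⟨nextD γ, (hnextD γ hγδ).1, hβγ.trans (hnextD γ hγδ).2,
        (le_max_right _ _).trans_lt hgγ⟩
  · exact hC.2.2 α hα h0 fun β hβ =>
      let ⟨γ, hγ, hβγ, hγα⟩ := hcl β hβ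
      ⟨γ, hγ.1, hβγ, hγα⟩
  · exact hD.2.2 α hα h0 fun β hβ =>
      let ⟨γ, hγ, hβγ, hγα⟩ := hcl β hβ
      ⟨γ, hγ.2, hβγ, hγα⟩

theorem iSup_Iio_add_one_lt_ord {c : Cardinal.{0}} (hc : c.IsRegular)
    {F : Ordinal.{0} → Ordinal.{0}} (hF : ∀ α < c.ord, F α < c.ord) {β : Ordinal.{0}}
    (hβ : β < c.ord) : ⨆ α : Iio β, F α + 1 < c.ord := by
  apply Ordinal.lift_iSup_add_one_lt_of_lt_cof (f := fun α : Iio β => F α) _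
    fun α => hF α (α.2.trans hβ)
  rw [← Ordinal.lift_cof, hc.cof_ord, Cardinal.mk_Iio_ordinal, Cardinal.lift_id',
    Cardinal.lift_lt]
  exact Cardinal.lt_ord.mp hβ

theorem isClubIn_setOf_forall_lt_imp_lt {c : Cardinal.{0}} (hc : c.IsRegular) (hc₀ : ℵ₀ < c)
    {F : Ordinal.{0} → Ordinal.{0}} (hF : ∀ α < c.ord, F α < c.ord) :
    IsClubIn c.ord {γ | γ < c.ord ∧ ∀ α < γ, F α < γ} := by
  have hsucc_lt : ∀ β < c.ord, β + 1 < c.ord := fun β hβ =>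
    (Cardinal.isSuccLimit_ord hc₀.le).add_one_lt hβ
  refine ⟨fun γ hγ => hγ.1, fun α hα => ?_, fun α hα _ hcl => ⟨hα, fun β hβ => ?_⟩⟩
  · obtain ⟨γ, hγc, hαγ, hγ⟩ := exists_lt_forall_exists_map_lt (hc.cof_ord.symm ▸ hc₀)
      (g := fun β => max (β + 1) (⨆ α : Iio β, F α + 1))
      (fun β hβ => ⟨(lt_add_one β).trans_le (le_max_left _ _),
        max_lt (hsucc_lt β hβ) (iSup_Iio_add_one_lt_ord hc hF hβ)⟩) hα
    refine ⟨γ, ⟨hγc, fun β hβ => ?_⟩, hαγ⟩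
    obtain ⟨η, -, hβη, hgη⟩ := hγ β hβ
    calc F β < F β + 1 := lt_add_one _
      _ ≤ ⨆ α : Iio η, F α + 1 := Ordinal.le_iSup (fun α : Iio η => F α + 1) ⟨β, hβη⟩
      _ ≤ max (η + 1) (⨆ α : Iio η, F α + 1) := le_max_right _ _
      _ < γ := hgη
  · obtain ⟨γ, hγ, hβγ, hγα⟩ := hcl β hβ
    exact (hγ.2 β hβγ).trans hγα

theorem Approachable.reindex {u z : Ordinal.{0} → Set Ordinal.{0}} {h : Ordinal.{0} → Ordinal.{0}}
    {γ : Ordinal.{0}} (hh : ∀ α < γ, h α < γ ∧ z (h α) = u α) (hγ : Approachable u γ) :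
    Approachable z γ := by
  obtain ⟨f, hf_mono, hf_lt, hf_cofinal, hf_init⟩ := hγ
  refine ⟨f, hf_mono, hf_lt, hf_cofinal, fun ξ hξ => ?_⟩
  obtain ⟨α, hαγ, hα⟩ := hf_init ξ hξ
  exact ⟨h α, (hh α hαγ).1, (hh α hαγ).2.trans hα⟩

theorem statement1_general (κ : Cardinal.{0}) (hκ : ℵ₀ ≤ κ)
    (z : Ordinal.{0} → Set Ordinal.{0})
    (hsurj : ∀ x : Set Ordinal.{0}, x ⊆ Set.Iio (Order.succ κ).ord →
      #x < Cardinal.lift.{1} κ → ∃ α < (Order.succ κ).ord, z α = x)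
    (S : Set Ordinal.{0}) (hSsub : S ⊆ SCof κ)
    (hSI : InAppIdeal κ S) :
    ¬ IsStationaryIn (Order.succ κ).ord
      (S \ {γ | γ ∈ SCof κ ∧ Approachable z γ}) := by
  intro hstat
  obtain ⟨D, u, hD, hu, happ⟩ := hSI
  have hsucc_reg := Cardinal.isRegular_succ hκ
  have hsucc₀ : ℵ₀ < Order.succ κ := hκ.trans_lt (Order.lt_succ κ)
  choose! h hh_lt hh_eq using fun α hα => hsurj (u α) (hu α hα).1 (hu α hα).2
  obtain ⟨γ, ⟨hγS, hγM⟩, hγD, hγδ, hγh⟩ := hstat _ <|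
    hD.inter (isClubIn_setOf_forall_lt_imp_lt hsucc_reg hsucc₀ hh_lt)
      (hsucc_reg.cof_ord.symm ▸ hsucc₀)
  exact hγM ⟨hSsub hγS,
    (happ γ ⟨hγD, hγS⟩).reindex fun α hα => ⟨hγh α hα, hh_eq α (hα.trans hγδ)⟩⟩

theorem statement1 (κ : Cardinal.{0}) (hκ : ℵ₀ ≤ κ) (hreg : κ.IsRegular)
    (z : Ordinal.{0} → Set Ordinal.{0})
    (hz : ∀ α < (Order.succ κ).ord,
      z α ⊆ Set.Iio (Order.succ κ).ord ∧ #(z α) < Cardinal.lift.{1} κ)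
    (hsurj : ∀ x : Set Ordinal.{0}, x ⊆ Set.Iio (Order.succ κ).ord →
      #x < Cardinal.lift.{1} κ → ∃ α < (Order.succ κ).ord, z α = x)
    (S : Set Ordinal.{0}) (hSsub : S ⊆ SCof κ)
    (hSstat : IsStationaryIn (Order.succ κ).ord S)
    (hSI : InAppIdeal κ S) :
    ¬ IsStationaryIn (Order.succ κ).ord
      (S \ {γ | γ ∈ SCof κ ∧ Approachable z γ}) :=
  statement1_general κ hκ z hsurj S hSsub hSI
end

section
/- Let κ be an infinite regular cardinal with κ^{<κ} ≤ κ⁺. Then there exists a set M ⊆ S^{κ⁺}_κ such that: (i) M is stationary in κ⁺; (ii) M belongs to the approachability ideal I[κ⁺]; and (iii) for every stationary S ⊆ S^{κ⁺}_κ with S ∈ I[κ⁺], the set S \ M is non-stationary in κ⁺ (i.e., M is a maximum element of I[κ⁺] ∩ P(S^{κ⁺}_κ) modulo the non-stationary ideal). -/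
open Set Cardinal

/-!
Since `κ^{<κ} ≤ κ⁺`, the family `[κ⁺]^{<κ}` can be listed as `⟨u_α : α < κ⁺⟩`; take `M` to be the
points of `S^{κ⁺}_κ` approachable with respect to `u`, so `M ∈ I[κ⁺]` with the trivial club.
Given a club `C`, build an increasing `κ`-sequence in `C` whose every term lies above an index of
the set of earlier terms; its supremum is a point of `C ∩ M`. If `S ∈ I[κ⁺]` is witnessed by
`D` and `v`, write `v_α = u_{g α}`; every point of `S` that lies in `D` and is closed under `g`
is in `M`, so `S \ M` misses a club.
-/

namespace Approachability

open Ordinal Order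

lemma isClubIn_Iio {δ : Ordinal.{0}} (hδ : IsSuccLimit δ) : IsClubIn δ (Iio δ) :=
  ⟨subset_rfl, fun α hα => ⟨succ α, hδ.succ_lt hα, lt_succ α⟩, fun _ hα _ _ => hα⟩

lemma iSup_Iio_lt_of_card_lt_cof {o c : Ordinal.{0}} {f : Ordinal.{0} → Ordinal.{0}}
    (ho : o.card < c.cof) (hf : ∀ η < o, f η < c) : ⨆ η : Iio o, f η < c := by
  refine lift_iSup_lt_of_lt_cof ?_ fun η => hf η η.2
  rwa [Cardinal.mk_Iio_ordinal, Cardinal.lift_id'.{0, 1}, ← lift_cof, Cardinal.lift_lt]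

lemma isClubIn_closurePoints {θ : Cardinal.{0}} (hθ : θ.IsRegular) (hθ₀ : θ ≠ ℵ₀)
    {g : Ordinal.{0} → Ordinal.{0}} (hg : ∀ α < θ.ord, g α < θ.ord) :
    IsClubIn θ.ord {γ | γ < θ.ord ∧ ∀ α < γ, g α < γ} := by
  have hlim : IsSuccLimit θ.ord := isSuccLimit_ord hθ.aleph0_le
  refine ⟨fun γ hγ => hγ.1, fun α hα => ?_, fun γ hγ _ hcl => ⟨hγ, fun α hα => ?_⟩⟩
  · -- `F a` bounds `g` on `Iio a`, so the supremum of the iterates of `F` is closed under `g`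
    let F : Ordinal.{0} → Ordinal.{0} := fun a => max (succ a) (⨆ β : Iio a, succ (g β))
    have hF : ∀ a < θ.ord, F a < θ.ord := fun a ha =>
      max_lt (hlim.succ_lt ha) <| iSup_Iio_lt_of_card_lt_cof (by rwa [hθ.cof_ord, ← lt_ord])
        fun β hβ => hlim.succ_lt (hg β (hβ.trans ha))
    refine ⟨nfp F (succ α), ⟨nfp_lt_ord_of_isRegular hθ hθ₀ hF (hlim.succ_lt hα),
      fun ζ hζ => ?_⟩, (lt_succ α).trans_le (le_nfp F _)⟩
    obtain ⟨n, hn⟩ := lt_nfp_iff.1 hζ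
    calc g ζ < succ (g ζ) := lt_succ _
      _ ≤ ⨆ β : Iio (F^[n] (succ α)), succ (g β) :=
        Ordinal.le_iSup (fun β : Iio (F^[n] (succ α)) => succ (g β)) ⟨ζ, hn⟩
      _ ≤ F^[n + 1] (succ α) := by rw [Function.iterate_succ_apply']; exact le_max_right _ _
      _ ≤ nfp F (succ α) := iterate_le_nfp F _ _
  · obtain ⟨β, hβ, hαβ, hβγ⟩ := hcl α hα
    exact (hβ.2 α hαβ).trans hβγ

/-- `[κ⁺]^{<κ}`. -/
def smallSubsets (κ : Cardinal.{0}) : Set (Set Ordinal.{0}) :=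
  {s | s ⊆ Iio (succ κ).ord ∧ #s < Cardinal.lift.{1} κ}

lemma exists_lt_subset_Iio_of_mk_lt_cof {δ : Ordinal.{0}} (hδ : IsSuccLimit δ)
    {s : Set Ordinal.{0}} (hs : s ⊆ Iio δ) (hcard : #s < Cardinal.lift.{1} δ.cof) :
    ∃ β < δ, s ⊆ Iio β := by
  have hsup : sSup s < δ := sSup_lt_of_lt_cof (by rwa [← lift_cof]) hs
  exact ⟨succ (sSup s), hδ.succ_lt hsup, fun x hx =>
    lt_succ_iff.2 (le_csSup ⟨δ, fun y hy => (hs hy).le⟩ hx)⟩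

lemma mk_smallSubsets_le {κ : Cardinal.{0}} (hκ : ℵ₀ ≤ κ) (harith : κ ^< κ ≤ succ κ) :
    #(smallSubsets κ) ≤ Cardinal.lift.{1} (succ κ) := by
  have hcof : (succ κ).ord.cof = succ κ := (isRegular_succ hκ).cof_ord
  have hcover : smallSubsets κ ⊆ ⋃ p : Iio (succ κ).ord × Iio κ.ord,
      {s | s ⊆ Iio p.1.1 ∧ #s ≤ Cardinal.lift.{1} p.2.1.card} := by
    rintro s ⟨hs, hcard⟩
    obtain ⟨β, hβ, hsβ⟩ :=
      exists_lt_subset_Iio_of_mk_lt_cof (isSuccLimit_ord (hκ.trans (le_succ κ))) hs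
        (by rw [hcof]; exact hcard.trans_le (Cardinal.lift_le.2 (le_succ κ)))
    obtain ⟨μ, hμ⟩ := Cardinal.mem_range_lift_of_le hcard.le
    refine mem_iUnion.2 ⟨(⟨β, hβ⟩, ⟨μ.ord, ord_lt_ord.2 ?_⟩), hsβ, by rw [card_ord, hμ]⟩
    rwa [← hμ, Cardinal.lift_lt] at hcard
  have hpiece : ∀ p : Iio (succ κ).ord × Iio κ.ord,
      #{s | s ⊆ Iio p.1.1 ∧ #s ≤ Cardinal.lift.{1} p.2.1.card} ≤ Cardinal.lift.{1} (succ κ) := by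
    rintro ⟨⟨β, hβ⟩, ⟨μ, hμ⟩⟩
    have hbase : max #(Iio β) ℵ₀ ≤ Cardinal.lift.{1} κ := by
      refine max_le ?_ (by simpa using hκ)
      rw [Cardinal.mk_Iio_ordinal, Cardinal.lift_le, ← lt_succ_iff, ← lt_ord]
      exact hβ
    calc #{s | s ⊆ Iio β ∧ #s ≤ Cardinal.lift.{1} μ.card}
        ≤ max #(Iio β) ℵ₀ ^ Cardinal.lift.{1} μ.card := mk_bounded_subset_le _ _
      _ ≤ Cardinal.lift.{1} (κ ^ μ.card) := by
        rw [lift_power]; exact power_le_power_right hbase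
      _ ≤ Cardinal.lift.{1} (succ κ) :=
        Cardinal.lift_le.2 ((le_powerlt κ (lt_ord.1 hμ)).trans harith)
  calc #(smallSubsets κ)
      ≤ #(Iio (succ κ).ord × Iio κ.ord) * Cardinal.lift.{1} (succ κ) :=
        (mk_le_mk_of_subset hcover).trans <|
          (mk_iUnion_le _).trans (mul_le_mul' le_rfl (ciSup_le' hpiece))
    _ ≤ Cardinal.lift.{1} (succ κ) := by
      rw [mk_prod, Cardinal.mk_Iio_ordinal, Cardinal.mk_Iio_ordinal, card_ord, card_ord]
      simp only [Cardinal.lift_id, ← Cardinal.lift_mul, Cardinal.lift_le]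
      have hinf : ℵ₀ ≤ succ κ := hκ.trans (le_succ κ)
      calc succ κ * κ * succ κ ≤ succ κ * succ κ * succ κ := by gcongr; exact le_succ κ
        _ = succ κ := by rw [mul_eq_self hinf, mul_eq_self hinf]

lemma exists_surjOn_Iio_of_mk_le {δ : Ordinal.{0}} {T : Set (Set Ordinal.{0})}
    (hT : T.Nonempty) (hle : #T ≤ Cardinal.lift.{1} δ.card) :
    ∃ u : Ordinal.{0} → Set Ordinal.{0}, (∀ α, u α ∈ T) ∧ SurjOn u (Iio δ) T := by
  obtain ⟨g⟩ : Nonempty (T ↪ Iio δ) := by rwa [← Cardinal.le_def, Cardinal.mk_Iio_ordinal]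
  have : Nonempty T := hT.to_subtype
  let i : T → Ordinal.{0} := fun t => g t
  have hi : Function.Injective i := Subtype.val_injective.comp g.injective
  refine ⟨fun α => (Function.invFun i α : T), fun α => (Function.invFun i α).2,
    fun s hs => ⟨g ⟨s, hs⟩, (g ⟨s, hs⟩).2, ?_⟩⟩
  exact congrArg Subtype.val (Function.leftInverse_invFun hi ⟨s, hs⟩)

def EnumeratesSmallSubsets (κ : Cardinal.{0}) (u : Ordinal.{0} → Set Ordinal.{0}) : Prop :=
  (∀ α, u α ∈ smallSubsets κ) ∧ SurjOn u (Iio (succ κ).ord) (smallSubsets κ)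

lemma exists_enumeratesSmallSubsets {κ : Cardinal.{0}} (hκ : ℵ₀ ≤ κ)
    (harith : κ ^< κ ≤ succ κ) : ∃ u, EnumeratesSmallSubsets κ u := by
  have hempty : ∅ ∈ smallSubsets κ :=
    ⟨empty_subset _, by simpa using aleph0_pos.trans_le hκ⟩
  exact exists_surjOn_Iio_of_mk_le ⟨∅, hempty⟩ (by simpa using mk_smallSubsets_le hκ harith)

lemma EnumeratesSmallSubsets.invFunOn_lt_and_eq {κ : Cardinal.{0}}
    {u : Ordinal.{0} → Set Ordinal.{0}} (hu : EnumeratesSmallSubsets κ u)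
    {s : Set Ordinal.{0}} (hs : s ∈ smallSubsets κ) :
    Function.invFunOn u (Iio (succ κ).ord) s < (succ κ).ord ∧
      u (Function.invFunOn u (Iio (succ κ).ord) s) = s :=
  ⟨hu.2.mapsTo_invFunOn hs, hu.2.rightInvOn_invFunOn hs⟩

section

variable {κ : Cardinal.{0}} {u : Ordinal.{0} → Set Ordinal.{0}} {e : Ordinal.{0} → Ordinal.{0}}

lemma cof_iSup_Iio_ord (hreg : κ.IsRegular) (he : StrictMonoOn e (Iio κ.ord)) :
    (⨆ ξ : Iio κ.ord, e ξ).cof = κ := by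
  rw [cof_iSup_Iio (fun a b h => he a.2 b.2 h) (isSuccLimit_ord hreg.aleph0_le).isSuccPrelimit,
    hreg.cof_ord]

lemma lt_iSup_Iio_of_strictMonoOn {o : Ordinal.{0}} (ho : IsSuccLimit o)
    (he : StrictMonoOn e (Iio o)) {ξ : Ordinal.{0}} (hξ : ξ < o) : e ξ < ⨆ η : Iio o, e η :=
  (he hξ (ho.succ_lt hξ) (lt_succ ξ)).trans_le
    (Ordinal.le_iSup (fun η : Iio o => e η) ⟨succ ξ, ho.succ_lt hξ⟩)

lemma approachable_iSup (hreg : κ.IsRegular) (he : StrictMonoOn e (Iio κ.ord))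
    (hinit : ∀ ξ < κ.ord, ∃ α < e ξ, u α = e '' Iio ξ) :
    Approachable u (⨆ ξ : Iio κ.ord, e ξ) := by
  have hlt : ∀ ξ < κ.ord, e ξ < ⨆ η : Iio κ.ord, e η := fun _ hξ =>
    lt_iSup_Iio_of_strictMonoOn (isSuccLimit_ord hreg.aleph0_le) he hξ
  rw [Approachable, cof_iSup_Iio_ord hreg he]
  refine ⟨e, fun ξ η hξη hη => he (hξη.trans hη) hη hξη, hlt, fun β hβ => ?_,
    fun ξ hξ => ?_⟩
  · obtain ⟨⟨ξ, hξ⟩, hβξ⟩ := Ordinal.lt_iSup_iff.1 hβ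
    exact ⟨ξ, hξ, hβξ.le⟩
  · obtain ⟨α, hα, hαu⟩ := hinit ξ hξ
    exact ⟨α, hα.trans (hlt ξ hξ), hαu⟩

end

/-- `next` will pick points of a club and `idx` indices in an enumeration of `[κ⁺]^{<κ}`; each term
lies above the index of the set of earlier terms, which makes the supremum approachable. -/
noncomputable def approachSeq (next : Ordinal.{0} → Ordinal.{0})
    (idx : Set Ordinal.{0} → Ordinal.{0}) (ξ : Ordinal.{0}) : Ordinal.{0} :=
  next (max (⨆ η : Iio ξ, succ (approachSeq next idx η))
    (idx (range fun η : Iio ξ => approachSeq next idx η)))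
termination_by ξ
decreasing_by all_goals exact η.2

section

variable {κ : Cardinal.{0}} {C : Set Ordinal.{0}} {u : Ordinal.{0} → Set Ordinal.{0}}
  {next : Ordinal.{0} → Ordinal.{0}} {idx : Set Ordinal.{0} → Ordinal.{0}}

lemma range_mem_smallSubsets (f : Ordinal.{0} → Ordinal.{0}) {ξ : Ordinal.{0}} (hξ : ξ < κ.ord)
    (hf : ∀ η < ξ, f η < (succ κ).ord) : range (fun η : Iio ξ => f η) ∈ smallSubsets κ := by
  refine ⟨?_, mk_range_le.trans_lt ?_⟩
  · rintro _ ⟨η, rfl⟩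
    exact hf η η.2
  · rw [Cardinal.mk_Iio_ordinal, Cardinal.lift_lt]
    exact lt_ord.1 hξ

variable (hκ : ℵ₀ ≤ κ) (hC : C ⊆ Iio (succ κ).ord)
  (hnext : ∀ a < (succ κ).ord, next a ∈ C ∧ a < next a)
  (hidx : ∀ s ∈ smallSubsets κ, idx s < (succ κ).ord ∧ u (idx s) = s)
include hκ hidx

lemma max_iSup_succ_approachSeq_lt {ξ : Ordinal.{0}} (hξ : ξ < κ.ord)
    (hprev : ∀ η < ξ, approachSeq next idx η < (succ κ).ord) :
    max (⨆ η : Iio ξ, succ (approachSeq next idx η))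
      (idx (range fun η : Iio ξ => approachSeq next idx η)) < (succ κ).ord := by
  refine max_lt ?_ (hidx _ (range_mem_smallSubsets _ hξ hprev)).1
  refine iSup_Iio_lt_of_card_lt_cof ?_
    fun η hη => (isSuccLimit_ord (hκ.trans (le_succ κ))).succ_lt (hprev η hη)
  rw [(isRegular_succ hκ).cof_ord]
  exact (lt_ord.1 hξ).trans (lt_succ κ)

include hC hnext

lemma approachSeq_mem : ∀ ξ < κ.ord, approachSeq next idx ξ ∈ C := by
  intro ξ
  induction ξ using WellFoundedLT.induction with
  | _ ξ ih =>
    intro hξ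
    rw [approachSeq]
    exact (hnext _ (max_iSup_succ_approachSeq_lt hκ hidx hξ
      fun η hη => hC (ih η hη (hη.trans hξ)))).1

lemma max_lt_approachSeq {ξ : Ordinal.{0}} (hξ : ξ < κ.ord) :
    max (⨆ η : Iio ξ, succ (approachSeq next idx η))
      (idx (range fun η : Iio ξ => approachSeq next idx η)) < approachSeq next idx ξ := by
  rw [approachSeq.eq_1 next idx ξ]
  exact (hnext _ (max_iSup_succ_approachSeq_lt hκ hidx hξ
    fun η hη => hC (approachSeq_mem hκ hC hnext hidx η (hη.trans hξ)))).2

lemma approachSeq_strictMonoOn : StrictMonoOn (approachSeq next idx) (Iio κ.ord) :=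
  fun η _ ξ hξ hηξ => calc
    approachSeq next idx η < succ (approachSeq next idx η) := lt_succ _
    _ ≤ ⨆ ζ : Iio ξ, succ (approachSeq next idx ζ) :=
      Ordinal.le_iSup (fun ζ : Iio ξ => succ (approachSeq next idx ζ)) ⟨η, hηξ⟩
    _ < approachSeq next idx ξ :=
      (le_max_left _ _).trans_lt (max_lt_approachSeq hκ hC hnext hidx hξ)

lemma exists_eq_image_approachSeq {ξ : Ordinal.{0}} (hξ : ξ < κ.ord) :
    ∃ α < approachSeq next idx ξ, u α = approachSeq next idx '' Iio ξ := by
  have hprev : ∀ η < ξ, approachSeq next idx η < (succ κ).ord :=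
    fun η hη => hC (approachSeq_mem hκ hC hnext hidx η (hη.trans hξ))
  rw [image_eq_range]
  exact ⟨_, (le_max_right _ _).trans_lt (max_lt_approachSeq hκ hC hnext hidx hξ),
    (hidx _ (range_mem_smallSubsets _ hξ hprev)).2⟩

end

lemma exists_mem_club_approachable {κ : Cardinal.{0}} (hreg : κ.IsRegular)
    {u : Ordinal.{0} → Set Ordinal.{0}} (hu : EnumeratesSmallSubsets κ u)
    {C : Set Ordinal.{0}} (hC : IsClubIn (succ κ).ord C) :
    ∃ γ ∈ C, γ ∈ SCof κ ∧ Approachable u γ := by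
  have hκ := hreg.aleph0_le
  choose! next hnext using hC.2.1
  have hidx := fun s (hs : s ∈ smallSubsets κ) => hu.invFunOn_lt_and_eq hs
  set e := approachSeq next (Function.invFunOn u (Iio (succ κ).ord))
  have hmem := approachSeq_mem hκ hC.1 hnext hidx
  have hmono := approachSeq_strictMonoOn hκ hC.1 hnext hidx
  have hlt : ∀ ξ < κ.ord, e ξ < ⨆ η : Iio κ.ord, e η :=
    fun _ hξ => lt_iSup_Iio_of_strictMonoOn (isSuccLimit_ord hκ) hmono hξ
  have hsup : ⨆ η : Iio κ.ord, e η < (succ κ).ord :=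
    iSup_Iio_lt_of_card_lt_cof (by rw [(isRegular_succ hκ).cof_ord, card_ord]; exact lt_succ κ)
      fun ξ hξ => hC.1 (hmem ξ hξ)
  refine ⟨_, hC.2.2 _ hsup (hlt 0 hreg.ord_pos).pos fun β hβ => ?_,
    ⟨hsup, cof_iSup_Iio_ord hreg hmono⟩,
    approachable_iSup hreg hmono fun ξ hξ => exists_eq_image_approachSeq hκ hC.1 hnext hidx hξ⟩
  obtain ⟨⟨ξ, hξ⟩, hβξ⟩ := Ordinal.lt_iSup_iff.1 hβ
  exact ⟨_, hmem ξ hξ, hβξ, hlt ξ hξ⟩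

lemma Approachable.of_forall_exists_eq {u v : Ordinal.{0} → Set Ordinal.{0}} {γ : Ordinal.{0}}
    (h : Approachable v γ) (hvu : ∀ α < γ, ∃ β < γ, u β = v α) : Approachable u γ := by
  obtain ⟨f, hmono, hlt, hcof, hinit⟩ := h
  refine ⟨f, hmono, hlt, hcof, fun ξ hξ => ?_⟩
  obtain ⟨α, hα, hαf⟩ := hinit ξ hξ
  obtain ⟨β, hβ, hβα⟩ := hvu α hα
  exact ⟨β, hβ, hβα.trans hαf⟩

lemma not_isStationaryIn_diff {κ : Cardinal.{0}} (hreg : κ.IsRegular)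
    {u : Ordinal.{0} → Set Ordinal.{0}} (hu : EnumeratesSmallSubsets κ u)
    {S : Set Ordinal.{0}} (hS : S ⊆ SCof κ) (hSI : InAppIdeal κ S) :
    ¬ IsStationaryIn (succ κ).ord (S \ {γ | γ ∈ SCof κ ∧ Approachable u γ}) := by
  have hκ := hreg.aleph0_le
  obtain ⟨D, v, hD, hv, happ⟩ := hSI
  choose! next hnext using hD.2.1
  set idx := Function.invFunOn u (Iio (succ κ).ord)
  have hidx := fun α (hα : α < (succ κ).ord) => hu.invFunOn_lt_and_eq (hv α hα)
  -- at a closure point of `idx ∘ v` and `next`, `v`-approachability becomes `u`-approachability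
  have hclub := isClubIn_closurePoints (g := fun α => max (idx (v α)) (next α))
    (isRegular_succ hκ) (hκ.trans_lt (lt_succ κ)).ne'
    fun α hα => max_lt (hidx α hα).1 (hD.1 (hnext α hα).1)
  intro hstat
  obtain ⟨γ, ⟨hγS, hγM⟩, hγ, hγcl⟩ := hstat _ hclub
  have hγpos : 0 < γ := by
    rw [← cof_pos, (hS hγS).2]
    exact hreg.pos
  have hγD : γ ∈ D := hD.2.2 γ hγ hγpos fun β hβ =>
    ⟨next β, (hnext β (hβ.trans hγ)).1, (hnext β (hβ.trans hγ)).2,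
      (le_max_right _ _).trans_lt (hγcl β hβ)⟩
  refine hγM ⟨hS hγS, Approachable.of_forall_exists_eq (happ γ ⟨hγD, hγS⟩) fun α hα => ?_⟩
  exact ⟨idx (v α), (le_max_left _ _).trans_lt (hγcl α hα), (hidx α (hα.trans hγ)).2⟩

end Approachability

open Approachability

theorem statement3_general (κ : Cardinal.{0}) (hreg : κ.IsRegular)
    (harith : κ ^< κ ≤ Order.succ κ) :
    ∃ M : Set Ordinal.{0}, M ⊆ SCof κ ∧
      IsStationaryIn (Order.succ κ).ord M ∧
      InAppIdeal κ M ∧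
      ∀ S ⊆ SCof κ, IsStationaryIn (Order.succ κ).ord S → InAppIdeal κ S →
        ¬ IsStationaryIn (Order.succ κ).ord (S \ M) := by
  obtain ⟨u, hu⟩ := exists_enumeratesSmallSubsets hreg.aleph0_le harith
  refine ⟨{γ | γ ∈ SCof κ ∧ Approachable u γ}, fun γ hγ => hγ.1, fun C hC => ?_,
    ⟨Iio _, u, isClubIn_Iio (isSuccLimit_ord (hreg.aleph0_le.trans (Order.le_succ κ))),
      fun α _ => hu.1 α, fun γ hγ => hγ.2.2⟩,
    fun S hS _ hSI => not_isStationaryIn_diff hreg hu hS hSI⟩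
  obtain ⟨γ, hγC, hγ, hγu⟩ := exists_mem_club_approachable hreg hu hC
  exact ⟨γ, ⟨hγ, hγu⟩, hγC⟩

theorem statement3 (κ : Cardinal.{0}) (hκ : ℵ₀ ≤ κ) (hreg : κ.IsRegular)
    (harith : κ ^< κ ≤ Order.succ κ) :
    ∃ M : Set Ordinal.{0}, M ⊆ SCof κ ∧
      IsStationaryIn (Order.succ κ).ord M ∧
      InAppIdeal κ M ∧
      ∀ S ⊆ SCof κ, IsStationaryIn (Order.succ κ).ord S → InAppIdeal κ S →
        ¬ IsStationaryIn (Order.succ κ).ord (S \ M) :=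
  statement3_general κ hreg harith
end

section
/- Let κ be an infinite regular cardinal. The poset Q₀ is <κ⁺-directed closed: every subset of Q₀ of cardinality at most κ that is directed with respect to the ordering of Q₀ has a lower bound in Q₀. -/
open Set Cardinal

/-- A condition in the poset `Q₀`: a partial function `f` (coded by its graph, a set of
triples `(δ, ξ, β)` meaning `f(δ)(ξ) = β`) whose domain is a subset of `S^{κ⁺}_κ` of
cardinality at most `κ`, such that `f(δ)` is a (total) function from `δ` to `δ` for every
`δ` in the domain, and such that whenever `δ < η` are both in the domain, `f(δ)` is not a
restriction of `f(η)` (they disagree at some `ξ < δ`).  The ordering of `Q₀` is reverse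
inclusion of graphs. -/
def IsQ0Cond (κ : Cardinal.{0}) (p : Set (Ordinal.{0} × Ordinal.{0} × Ordinal.{0})) :
    Prop :=
  (∀ x ∈ p, x.1 < (Order.succ κ).ord ∧ x.1.cof = κ) ∧
  #{δ : Ordinal.{0} | ∃ ξ β, (δ, ξ, β) ∈ p} ≤ Cardinal.lift.{1} κ ∧
  (∀ δ ξ β, (δ, ξ, β) ∈ p → ξ < δ ∧ β < δ) ∧
  (∀ δ ξ β β', (δ, ξ, β) ∈ p → (δ, ξ, β') ∈ p → β = β') ∧
  (∀ δ ξ β, (δ, ξ, β) ∈ p → ∀ ξ' < δ, ∃ β', (δ, ξ', β') ∈ p) ∧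
  (∀ δ η, (∃ ξ β, (δ, ξ, β) ∈ p) → (∃ ξ β, (η, ξ, β) ∈ p) → δ < η →
    ∃ ξ β β', ξ < δ ∧ (δ, ξ, β) ∈ p ∧ (η, ξ, β') ∈ p ∧ β ≠ β')

def q0dom (p : Set (Ordinal.{0} × Ordinal.{0} × Ordinal.{0})) : Set Ordinal.{0} :=
  {δ : Ordinal.{0} | ∃ ξ β, (δ, ξ, β) ∈ p}

lemma q0dom_card {κ : Cardinal.{0}} {p : Set (Ordinal.{0} × Ordinal.{0} × Ordinal.{0})}
    (h : IsQ0Cond κ p) : #(q0dom p) ≤ Cardinal.lift.{1} κ := h.2.1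

/-- The poset `Q₀` is `<κ⁺`-directed closed: every directed subset of `Q₀` of cardinality
at most `κ` has a lower bound in `Q₀` (a lower bound in the reverse-inclusion ordering is
a common superset that is itself a condition). -/
theorem statement4 (κ : Cardinal.{0}) (hκ : ℵ₀ ≤ κ) (hreg : κ.IsRegular)
    (D : Set (Set (Ordinal.{0} × Ordinal.{0} × Ordinal.{0})))
    (hD : ∀ p ∈ D, IsQ0Cond κ p)
    (hcard : #D ≤ Cardinal.lift.{1} κ)
    (hdir : ∀ p ∈ D, ∀ q ∈ D, ∃ r ∈ D, p ⊆ r ∧ q ⊆ r) :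
    ∃ r, IsQ0Cond κ r ∧ ∀ p ∈ D, p ⊆ r := by
  refine ⟨⋃₀ D, ⟨?_, ?_, ?_, ?_, ?_, ?_⟩, fun p hp x hx => ⟨p, hp, hx⟩⟩
  · rintro x ⟨p, hp, hx⟩
    exact (hD p hp).1 x hx
  · have hsub : q0dom (⋃₀ D) ⊆ ⋃ p ∈ D, q0dom p := by
      rintro δ ⟨ξ, β, p, hp, hx⟩
      exact mem_biUnion hp ⟨ξ, β, hx⟩
    have key : #(q0dom (⋃₀ D)) ≤ Cardinal.lift.{1} κ := by
      refine (mk_le_mk_of_subset hsub).trans ((mk_biUnion_le q0dom D).trans ?_)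
      rcases D.eq_empty_or_nonempty with h | h
      · subst h; simp
      · haveI : Nonempty D := h.to_subtype
        have hsup : ⨆ p : D, #(q0dom p.1) ≤ Cardinal.lift.{1} κ :=
          ciSup_le' fun p => q0dom_card (hD p.1 p.2)
        refine (mul_le_mul' hcard hsup).trans ?_
        exact (mul_eq_self (aleph0_le_lift.mpr hκ)).le
    exact key
  · rintro δ ξ β ⟨p, hp, hx⟩
    exact (hD p hp).2.2.1 δ ξ β hx
  · rintro δ ξ β β' ⟨p, hp, hx⟩ ⟨q, hq, hy⟩
    obtain ⟨r, hr, hpr, hqr⟩ := hdir p hp q hq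
    exact (hD r hr).2.2.2.1 δ ξ β β' (hpr hx) (hqr hy)
  · rintro δ ξ β ⟨p, hp, hx⟩ ξ' hξ'
    obtain ⟨β', hb⟩ := (hD p hp).2.2.2.2.1 δ ξ β hx ξ' hξ'
    exact ⟨β', p, hp, hb⟩
  · rintro δ η ⟨ξ, β, p, hp, hx⟩ ⟨ξ', β', q, hq, hy⟩ hlt
    obtain ⟨r, hr, hpr, hqr⟩ := hdir p hp q hq
    obtain ⟨ξ₀, β₀, β₁, h1, h2, h3, h4⟩ :=
      (hD r hr).2.2.2.2.2 δ η ⟨ξ, β, hpr hx⟩ ⟨ξ', β', hqr hy⟩ hlt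
    exact ⟨ξ₀, β₀, β₁, h1, ⟨r, hr, h2⟩, ⟨r, hr, h3⟩, h4⟩
end

section
/- Let κ be an infinite regular cardinal and let S ⊆ S^{κ⁺}_κ. Then the tree T(S) contains a cofinal branch (i.e., a chain of nodes whose domains are unbounded in κ⁺; equivalently, a strictly increasing function b : κ⁺ → S that is continuous at every point of cofinality κ and each of whose restrictions to a successor ordinal belongs to T(S)) if and only if S contains a κ-club. -/
open Set Cardinal

/-- `C` is a `κ`-club in `κ⁺`: it is an unbounded subset of `κ⁺` containing all of its
limit points (below `κ⁺`) of cofinality `κ`. -/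
def IsKappaClub (κ : Cardinal.{0}) (C : Set Ordinal.{0}) : Prop :=
  C ⊆ Set.Iio (Order.succ κ).ord ∧
  (∀ α < (Order.succ κ).ord, ∃ β ∈ C, α < β) ∧
  (∀ α < (Order.succ κ).ord, α.cof = κ →
    (∀ β < α, ∃ γ ∈ C, β < γ ∧ γ < α) → α ∈ C)

/-- `t` (restricted to `d`) is a node of the tree `T(S)`: `d` is a successor ordinal
below `κ⁺` and `t : d → S` is strictly increasing and continuous at all points of
cofinality `κ` in its domain. -/
def IsTSNode (κ : Cardinal.{0}) (S : Set Ordinal.{0}) (d : Ordinal.{0})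
    (t : Ordinal.{0} → Ordinal.{0}) : Prop :=
  d < (Order.succ κ).ord ∧ (∃ e, d = Order.succ e) ∧
  (∀ ξ < d, t ξ ∈ S) ∧
  (∀ ξ η, ξ < η → η < d → t ξ < t η) ∧
  (∀ ξ < d, ξ.cof = κ → t ξ = sSup (t '' Set.Iio ξ))

/-! A cofinal branch `b` gives the `κ`-club `b[κ⁺]`. For its closure at a point `α` of
cofinality `κ`, take the least `ξ` with `α ≤ b ξ`: the values of `b` below `ξ` are cofinal in `α`,
so `ξ` is a limit of the same cofinality `κ` as `α`, and continuity of `b` at `ξ` gives `b ξ = α`.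
Conversely, a `κ`-club `C` is climbed by recursion, moving to the next point of `C` at each step
and taking suprema at points of cofinality `κ`; such a supremum stays below `κ⁺` by regularity of
`κ⁺`, has cofinality `κ`, and so lies in `C` by closure. -/

open Order

namespace Ordinal

universe u

theorem sSup_image_Iio_lt_of_card_lt_cof {f : Ordinal.{u} → Ordinal.{u}} {ξ a : Ordinal.{u}}
    (hξ : ξ.card < a.cof) (hf : ∀ η < ξ, f η < a) : sSup (f '' Iio ξ) < a := by
  rw [sSup_image']
  refine lift_iSup_lt_of_lt_cof ?_ fun η => hf η η.2
  rwa [Cardinal.mk_Iio_ordinal, ← lift_cof, Cardinal.lift_lift, Cardinal.lift_lt]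

theorem cof_sSup_image_Iio {f : Ordinal.{u} → Ordinal.{u}} {ξ : Ordinal.{u}}
    (hf : StrictMonoOn f (Iio ξ)) (hξ : IsSuccPrelimit ξ) : (sSup (f '' Iio ξ)).cof = ξ.cof := by
  rw [sSup_image']
  exact cof_iSup_Iio hf.domRestrict hξ

theorem le_apply_of_strictMonoOn_Iio {f : Ordinal.{u} → Ordinal.{u}} {a : Ordinal.{u}}
    (hf : StrictMonoOn f (Iio a)) {ξ : Ordinal.{u}} (hξ : ξ < a) : ξ ≤ f ξ := by
  induction ξ using WellFoundedLT.induction with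
  | _ ξ IH =>
    refine le_of_forall_lt fun η hη => ?_
    exact (IH η hη (hη.trans hξ)).trans_lt (hf (hη.trans hξ) hξ hη)

theorem exists_isSuccPrelimit_sSup_image_Iio_eq {f : Ordinal.{u} → Ordinal.{u}}
    {a α : Ordinal.{u}} (hf : StrictMonoOn f (Iio a)) (hα : ∃ ζ < a, α ≤ f ζ)
    (hcofinal : ∀ β < α, ∃ γ ∈ f '' Iio a, β < γ ∧ γ < α) :
    ∃ ξ < a, IsSuccPrelimit ξ ∧ sSup (f '' Iio ξ) = α := by
  set ξ := sInf {ζ | ζ < a ∧ α ≤ f ζ}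
  obtain ⟨hξa, hαξ⟩ : ξ < a ∧ α ≤ f ξ := csInf_mem hα
  have below : ∀ η < ξ, f η < α := fun η hη =>
    not_le.1 fun h => notMem_of_lt_csInf' hη ⟨hη.trans hξa, h⟩
  have cofinal : ∀ β < α, ∃ η < ξ, β < f η ∧ f η < α := by
    intro β hβ
    obtain ⟨_, ⟨η, hη, rfl⟩, hβη, hηα⟩ := hcofinal β hβ
    refine ⟨η, not_le.1 fun h => ?_, hβη, hηα⟩
    exact hηα.not_ge (hαξ.trans (hf.monotoneOn hξa hη h))
  refine ⟨ξ, hξa, isSuccPrelimit_of_succ_lt fun η hη => ?_, ?_⟩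
  · obtain ⟨η', hη', hηη', -⟩ := cofinal (f η) (below η hη)
    exact (succ_le_of_lt ((hf.lt_iff_lt (hη.trans hξa) (hη'.trans hξa)).1 hηη')).trans_lt hη'
  · refine le_antisymm (csSup_le' ?_) (le_of_forall_lt fun β hβ => ?_)
    · rintro _ ⟨η, hη, rfl⟩
      exact (below η hη).le
    · obtain ⟨η, hη, hβη, -⟩ := cofinal β hβ
      exact hβη.trans_le (le_csSup bddAbove_of_small ⟨η, hη, rfl⟩)

end Ordinal

open Ordinal

theorem forall_isTSNode_succ_iff {κ : Cardinal.{0}} (hκ : ℵ₀ ≤ κ) {S : Set Ordinal.{0}}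
    {b : Ordinal.{0} → Ordinal.{0}} :
    (∀ d < (succ κ).ord, (∃ e, d = succ e) → IsTSNode κ S d b) ↔
      (∀ ξ < (succ κ).ord, b ξ ∈ S) ∧ StrictMonoOn b (Iio (succ κ).ord) ∧
        ∀ ξ < (succ κ).ord, ξ.cof = κ → b ξ = sSup (b '' Iio ξ) := by
  have hlim : IsSuccLimit (succ κ).ord := isSuccLimit_ord (hκ.trans (le_succ κ))
  constructor
  · intro H
    have node : ∀ ξ < (succ κ).ord, IsTSNode κ S (succ ξ) b := fun ξ hξ =>
      H _ (hlim.succ_lt hξ) ⟨ξ, rfl⟩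
    refine ⟨fun ξ hξ => (node ξ hξ).2.2.1 ξ (lt_succ ξ), ?_, fun ξ hξ =>
      (node ξ hξ).2.2.2.2 ξ (lt_succ ξ)⟩
    exact fun η _ ξ hξ hηξ => (node ξ hξ).2.2.2.1 η ξ hηξ (lt_succ ξ)
  · rintro ⟨hS, hmono, hcont⟩ d hd ⟨e, rfl⟩
    refine ⟨hd, ⟨e, rfl⟩, fun ξ hξ => hS ξ (hξ.trans hd), ?_, fun ξ hξ => hcont ξ (hξ.trans hd)⟩
    exact fun ξ η hξη hη => hmono (hξη.trans (hη.trans hd)) (hη.trans hd) hξη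

theorem isKappaClub_image_Iio {κ : Cardinal.{0}} (hκ : ℵ₀ ≤ κ) {f : Ordinal.{0} → Ordinal.{0}}
    (hf : StrictMonoOn f (Iio (succ κ).ord)) (hf_lt : ∀ ξ < (succ κ).ord, f ξ < (succ κ).ord)
    (hcont : ∀ ξ < (succ κ).ord, ξ.cof = κ → f ξ = sSup (f '' Iio ξ)) :
    IsKappaClub κ (f '' Iio (succ κ).ord) := by
  have hlim : IsSuccLimit (succ κ).ord := isSuccLimit_ord (hκ.trans (le_succ κ))
  refine ⟨image_subset_iff.2 hf_lt, fun α hα => ?_, fun α hα hcof hcofinal => ?_⟩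
  · refine ⟨f (succ α), mem_image_of_mem f (hlim.succ_lt hα), ?_⟩
    exact (le_apply_of_strictMonoOn_Iio hf hα).trans_lt (hf hα (hlim.succ_lt hα) (lt_succ α))
  · obtain ⟨ξ, hξ, hξlim, hsup⟩ := exists_isSuccPrelimit_sSup_image_Iio_eq hf
      ⟨α, hα, le_apply_of_strictMonoOn_Iio hf hα⟩ hcofinal
    have hξcof : ξ.cof = κ := by
      rw [← cof_sSup_image_Iio (hf.mono (Iio_subset_Iio hξ.le)) hξlim, hsup, hcof]
    exact ⟨ξ, hξ, by rw [hcont ξ hξ hξcof, hsup]⟩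

noncomputable def clubBranch (κ : Cardinal.{0}) (C : Set Ordinal.{0}) :
    Ordinal.{0} → Ordinal.{0} :=
  lt_wf.fix fun ξ ih =>
    if ξ.cof = κ then sSup (range fun η : Iio ξ => ih η η.2)
    else sInf {c ∈ C | sSup (range fun η : Iio ξ => ih η η.2) < c}

section clubBranch

variable {κ : Cardinal.{0}} {C : Set Ordinal.{0}}

theorem clubBranch_eq (ξ : Ordinal.{0}) :
    clubBranch κ C ξ = if ξ.cof = κ then sSup (clubBranch κ C '' Iio ξ)
      else sInf {c ∈ C | sSup (clubBranch κ C '' Iio ξ) < c} := by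
  rw [clubBranch, WellFounded.fix_eq, image_eq_range]

theorem clubBranch_of_cof_eq {ξ : Ordinal.{0}} (hξ : ξ.cof = κ) :
    clubBranch κ C ξ = sSup (clubBranch κ C '' Iio ξ) :=
  (clubBranch_eq ξ).trans (if_pos hξ)

theorem clubBranch_of_cof_ne {ξ : Ordinal.{0}} (hξ : ξ.cof ≠ κ) :
    clubBranch κ C ξ = sInf {c ∈ C | sSup (clubBranch κ C '' Iio ξ) < c} :=
  (clubBranch_eq ξ).trans (if_neg hξ)

theorem clubBranch_mem_and_lt (hκ : ℵ₀ ≤ κ) (hC : IsKappaClub κ C) {ξ : Ordinal.{0}}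
    (hξ : ξ < (succ κ).ord) :
    clubBranch κ C ξ ∈ C ∧ ∀ η < ξ, clubBranch κ C η < clubBranch κ C ξ := by
  induction ξ using WellFoundedLT.induction with
  | _ ξ IH =>
    set b := clubBranch κ C
    have hs : sSup (b '' Iio ξ) < (succ κ).ord := by
      refine sSup_image_Iio_lt_of_card_lt_cof ?_ fun η hη => hC.1 (IH η hη (hη.trans hξ)).1
      rw [(isRegular_succ hκ).cof_ord]
      exact lt_ord.1 hξ
    have le_sup : ∀ η < ξ, b η ≤ sSup (b '' Iio ξ) := fun η hη =>
      le_csSup bddAbove_of_small ⟨η, hη, rfl⟩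
    by_cases hcof : ξ.cof = κ
    · have hlim : IsSuccLimit ξ := one_lt_cof_iff.1 (hcof ▸ one_lt_aleph0.trans_le hκ)
      have hlt : ∀ η < ξ, b η < sSup (b '' Iio ξ) := fun η hη =>
        ((IH _ (hlim.succ_lt hη) ((hlim.succ_lt hη).trans hξ)).2 η (lt_succ η)).trans_le
          (le_sup _ (hlim.succ_lt hη))
      have hmono : StrictMonoOn b (Iio ξ) := fun η _ η' hη' hηη' =>
        (IH η' hη' (hη'.trans hξ)).2 η hηη'
      rw [show b ξ = sSup (b '' Iio ξ) from clubBranch_of_cof_eq hcof]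
      refine ⟨hC.2.2 _ hs (by rw [cof_sSup_image_Iio hmono hlim.isSuccPrelimit, hcof])
        fun β hβ => ?_, hlt⟩
      obtain ⟨_, ⟨η, hη, rfl⟩, hβη⟩ := exists_lt_of_lt_csSup' hβ
      exact ⟨b η, (IH η hη (hη.trans hξ)).1, hβη, hlt η hη⟩
    · rw [show b ξ = sInf {c ∈ C | sSup (b '' Iio ξ) < c} from clubBranch_of_cof_ne hcof]
      obtain ⟨hmem, hlt⟩ := csInf_mem (hC.2.1 _ hs)
      exact ⟨hmem, fun η hη => (le_sup η hη).trans_lt hlt⟩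

theorem clubBranch_mem (hκ : ℵ₀ ≤ κ) (hC : IsKappaClub κ C) {ξ : Ordinal.{0}}
    (hξ : ξ < (succ κ).ord) : clubBranch κ C ξ ∈ C :=
  (clubBranch_mem_and_lt hκ hC hξ).1

theorem strictMonoOn_clubBranch (hκ : ℵ₀ ≤ κ) (hC : IsKappaClub κ C) :
    StrictMonoOn (clubBranch κ C) (Iio (succ κ).ord) := fun _ _ _ hξ hηξ =>
  (clubBranch_mem_and_lt hκ hC hξ).2 _ hηξ

end clubBranch

theorem statement5_general (κ : Cardinal.{0}) (hκ : ℵ₀ ≤ κ)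
    (S : Set Ordinal.{0}) (hS : S ⊆ SCof κ) :
    (∃ b : Ordinal.{0} → Ordinal.{0},
      ∀ d < (Order.succ κ).ord, (∃ e, d = Order.succ e) → IsTSNode κ S d b) ↔
    (∃ C : Set Ordinal.{0}, IsKappaClub κ C ∧ C ⊆ S) := by
  simp only [forall_isTSNode_succ_iff hκ]
  constructor
  · rintro ⟨b, hbS, hb, hcont⟩
    exact ⟨_, isKappaClub_image_Iio hκ hb (fun ξ hξ => (hS (hbS ξ hξ)).1) hcont,
      image_subset_iff.2 hbS⟩
  · rintro ⟨C, hC, hCS⟩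
    exact ⟨clubBranch κ C, fun ξ hξ => hCS (clubBranch_mem hκ hC hξ),
      strictMonoOn_clubBranch hκ hC, fun ξ _ => clubBranch_of_cof_eq⟩

/-- `T(S)` has a cofinal branch (a strictly increasing continuous function
`b : κ⁺ → S`, all of whose restrictions to successor ordinals are nodes of `T(S)`)
if and only if `S` contains a `κ`-club. -/
theorem statement5 (κ : Cardinal.{0}) (hκ : ℵ₀ ≤ κ) (hreg : κ.IsRegular)
    (S : Set Ordinal.{0}) (hS : S ⊆ SCof κ) :
    (∃ b : Ordinal.{0} → Ordinal.{0},
      ∀ d < (Order.succ κ).ord, (∃ e, d = Order.succ e) → IsTSNode κ S d b) ↔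
    (∃ C : Set Ordinal.{0}, IsKappaClub κ C ∧ C ⊆ S) :=
  statement5_general κ hκ S hS
end
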